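/- The canonical hypergraph G^c of the canonical hypergraph model for EDL is simple, n-uniform and tail-complete. -/

import Mathlib

namespace DoxHG

/-- Formulas of the epistemic-doxastic language `L_KB`. -/
inductive Form (Ag Atom : Type) : Type
  | atom : Atom → Form Ag Atom
  | neg  : Form Ag Atom → Form Ag Atom
  | and  : Form Ag Atom → Form Ag Atom → Form Ag Atom
  | B    : Ag → Form Ag Atom → Form Ag Atom
  | K    : Ag → Form Ag Atom → Form Ag Atom

namespace Form

variable {Ag Atom : Type}

/-- φ ∨ ψ := ¬(¬φ ∧ ¬ψ) -/
def or (φ ψ : Form Ag Atom) : Form Ag Atom := .neg (.and (.neg φ) (.neg ψ))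

/-- φ → ψ := ¬φ ∨ ψ -/
def imp (φ ψ : Form Ag Atom) : Form Ag Atom := Form.or (.neg φ) ψ

/-- φ ↔ ψ -/
def biimp (φ ψ : Form Ag Atom) : Form Ag Atom := .and (φ.imp ψ) (ψ.imp φ)

/-- ⊥ := p ∧ ¬p for an arbitrary but fixed propositional variable p. -/
def bot [Inhabited Atom] : Form Ag Atom := .and (.atom default) (.neg (.atom default))

/-- Membership in the doxastic fragment `L_B` (no knowledge operators). -/
def noK : Form Ag Atom → Prop
  | .atom _  => True
  | .neg φ   => φ.noK
  | .and φ ψ => φ.noK ∧ ψ.noK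
  | .B _ φ   => φ.noK
  | .K _ _   => False

/-- φ is an `a`-formula: all variables are local variables of `a` (as given by
`owner`) and all modal operators are `B a` or `K a`. -/
def isAFormula (owner : Atom → Ag) (a : Ag) : Form Ag Atom → Prop
  | .atom p  => owner p = a
  | .neg φ   => φ.isAFormula owner a
  | .and φ ψ => φ.isAFormula owner a ∧ ψ.isAFormula owner a
  | .B b φ   => b = a ∧ φ.isAFormula owner a
  | .K b φ   => b = a ∧ φ.isAFormula owner a

end Form

/-- φ is (an instance of) a classical propositional tautology: it evaluates to
true under every boolean valuation that respects negation and conjunction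
(treating atoms and modal formulas as opaque). -/
def Tautology {Ag Atom : Type} (φ : Form Ag Atom) : Prop :=
  ∀ v : Form Ag Atom → Bool,
    (∀ ψ, v (.neg ψ) = !v ψ) →
    (∀ ψ χ, v (.and ψ χ) = (v ψ && v χ)) →
    v φ = true

/-! ### Doxastic Kripke models -/

/-- A doxastic Kripke model (with set of worlds the type `W`, assumed nonempty
where required): doxastic accessibility relations `B a` and valuation `V`. -/
structure KModel (Ag Atom W : Type) where
  B : Ag → W → W → Prop
  V : W → Set Atom

section Kripke

variable {Ag Atom W : Type}

/-- Kripke satisfaction `⊨ₖ`; `K a` is interpreted via the equivalence relation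
generated by `B a` (i.e. `Relation.EqvGen`, the smallest equivalence relation
containing it). -/
def ksat (M : KModel Ag Atom W) : W → Form Ag Atom → Prop
  | w, .atom p  => p ∈ M.V w
  | w, .neg φ   => ¬ ksat M w φ
  | w, .and φ ψ => ksat M w φ ∧ ksat M w ψ
  | w, .B a φ   => ∀ u, M.B a w u → ksat M u φ
  | w, .K a φ   => ∀ u, Relation.EqvGen (M.B a) w u → ksat M u φ

def KModel.Serial (M : KModel Ag Atom W) : Prop := ∀ (a : Ag) (w : W), ∃ u, M.B a w u

def KModel.Transit (M : KModel Ag Atom W) : Prop :=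
  ∀ (a : Ag) (u v w : W), M.B a u v → M.B a v w → M.B a u w

def KModel.Eucl (M : KModel Ag Atom W) : Prop :=
  ∀ (a : Ag) (u v w : W), M.B a u v → M.B a u w → M.B a v w

/-- Locality: worlds related by `B a ∪ (B a)⁻¹` agree on the local variables of `a`. -/
def KModel.Local (owner : Atom → Ag) (M : KModel Ag Atom W) : Prop :=
  ∀ (a : Ag) (u v : W), (M.B a u v ∨ M.B a v u) →
    M.V u ∩ {p | owner p = a} = M.V v ∩ {p | owner p = a}

/-- Properness: distinct worlds are distinguished by some agent. -/
def KModel.Proper (M : KModel Ag Atom W) : Prop :=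
  ∀ u v : W, u ≠ v → ∃ a : Ag, ¬ Relation.EqvGen (M.B a) u v

end Kripke

/-! ### The Hilbert systems EDL, LocK45 and LocKD45 -/

section ProofSystems

variable {Ag Atom : Type}

/-- Provability in the Hilbert system EDL. -/
inductive EDLProv (owner : Atom → Ag) : Form Ag Atom → Prop
  | taut {φ : Form Ag Atom} : Tautology φ → EDLProv owner φ
  | axKB (a : Ag) (φ ψ : Form Ag Atom) :
      EDLProv owner ((Form.B a (φ.imp ψ)).imp ((Form.B a φ).imp (Form.B a ψ)))
  | axDB (a : Ag) (φ : Form Ag Atom) :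
      EDLProv owner (Form.neg (Form.B a (Form.and φ (Form.neg φ))))
  | ax4B (a : Ag) (φ : Form Ag Atom) :
      EDLProv owner ((Form.B a φ).imp (Form.B a (Form.B a φ)))
  | ax5B (a : Ag) (φ : Form Ag Atom) :
      EDLProv owner ((Form.neg (Form.B a φ)).imp (Form.B a (Form.neg (Form.B a φ))))
  | axKK (a : Ag) (φ ψ : Form Ag Atom) :
      EDLProv owner ((Form.K a (φ.imp ψ)).imp ((Form.K a φ).imp (Form.K a ψ)))
  | axTK (a : Ag) (φ : Form Ag Atom) :
      EDLProv owner ((Form.K a φ).imp φ)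
  | ax4K (a : Ag) (φ : Form Ag Atom) :
      EDLProv owner ((Form.K a φ).imp (Form.K a (Form.K a φ)))
  | ax5K (a : Ag) (φ : Form Ag Atom) :
      EDLProv owner ((Form.neg (Form.K a φ)).imp (Form.K a (Form.neg (Form.K a φ))))
  | axPI (a : Ag) (φ : Form Ag Atom) :
      EDLProv owner ((Form.B a φ).imp (Form.K a (Form.B a φ)))
  | axNI (a : Ag) (φ : Form Ag Atom) :
      EDLProv owner ((Form.neg (Form.B a φ)).imp (Form.K a (Form.neg (Form.B a φ))))
  | axKIB (a : Ag) (φ : Form Ag Atom) :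
      EDLProv owner ((Form.K a φ).imp (Form.B a φ))
  | axLoc (a : Ag) (p : Atom) (h : owner p = a) :
      EDLProv owner (Form.and ((Form.atom p).imp (Form.B a (Form.atom p)))
        ((Form.neg (Form.atom p)).imp (Form.B a (Form.neg (Form.atom p)))))
  | mp {φ ψ : Form Ag Atom} :
      EDLProv owner (φ.imp ψ) → EDLProv owner φ → EDLProv owner ψ
  | nec (a : Ag) {φ : Form Ag Atom} : EDLProv owner φ → EDLProv owner (Form.K a φ)

/-- Provability in the Hilbert systems over the doxastic fragment `L_B`:
`BProv owner true` is LocKD45 (with axiom D_B) and `BProv owner false` is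
LocK45 (without D_B). -/
inductive BProv (owner : Atom → Ag) (withD : Bool) : Form Ag Atom → Prop
  | taut {φ : Form Ag Atom} : φ.noK → Tautology φ → BProv owner withD φ
  | axKB (a : Ag) {φ ψ : Form Ag Atom} (hφ : φ.noK) (hψ : ψ.noK) :
      BProv owner withD ((Form.B a (φ.imp ψ)).imp ((Form.B a φ).imp (Form.B a ψ)))
  | axDB (a : Ag) {φ : Form Ag Atom} (hD : withD = true) (hφ : φ.noK) :
      BProv owner withD (Form.neg (Form.B a (Form.and φ (Form.neg φ))))
  | ax4B (a : Ag) {φ : Form Ag Atom} (hφ : φ.noK) :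
      BProv owner withD ((Form.B a φ).imp (Form.B a (Form.B a φ)))
  | ax5B (a : Ag) {φ : Form Ag Atom} (hφ : φ.noK) :
      BProv owner withD ((Form.neg (Form.B a φ)).imp (Form.B a (Form.neg (Form.B a φ))))
  | axLoc (a : Ag) (p : Atom) (h : owner p = a) :
      BProv owner withD (Form.and ((Form.atom p).imp (Form.B a (Form.atom p)))
        ((Form.neg (Form.atom p)).imp (Form.B a (Form.neg (Form.atom p)))))
  | mp {φ ψ : Form Ag Atom} :
      BProv owner withD (φ.imp ψ) → BProv owner withD φ → BProv owner withD ψ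
  | nec (a : Ag) {φ : Form Ag Atom} : BProv owner withD φ → BProv owner withD (Form.B a φ)

/-- Conjunction of a finite list of formulas (the empty conjunction is ¬⊥). -/
def conj [Inhabited Atom] : List (Form Ag Atom) → Form Ag Atom
  | []        => Form.neg Form.bot
  | [φ]       => φ
  | φ :: rest => Form.and φ (conj rest)

/-- Γ ⊢ φ in EDL: some finite subset Δ ⊆ Γ has EDL ⊢ (⋀Δ) → φ. -/
def ProvFrom [Inhabited Atom] (owner : Atom → Ag) (Γ : Set (Form Ag Atom))
    (φ : Form Ag Atom) : Prop :=
  ∃ L : List (Form Ag Atom), (∀ ψ ∈ L, ψ ∈ Γ) ∧ EDLProv owner ((conj L).imp φ)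

/-- Γ is EDL-consistent. -/
def EDLConsistent [Inhabited Atom] (owner : Atom → Ag) (Γ : Set (Form Ag Atom)) : Prop :=
  ¬ ProvFrom owner Γ Form.bot

/-- Γ is maximally EDL-consistent. -/
def MaxEDLConsistent [Inhabited Atom] (owner : Atom → Ag) (Γ : Set (Form Ag Atom)) : Prop :=
  EDLConsistent owner Γ ∧ ∀ Δ : Set (Form Ag Atom), Γ ⊂ Δ → ¬ EDLConsistent owner Δ

end ProofSystems

/-! ### Directed hypergraph models -/

/-- The undirected hyperedge `ē = T(e) ∪ H(e)` induced by a directed hyperedge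
`e = (T(e), H(e))`. -/
def ebar {V : Type} (e : Set V × Set V) : Set V := e.1 ∪ e.2

/-- A (directed) hypergraph model: a vertex set, a set of directed hyperedges
(pairs (tail, head)), a coloring and a valuation.  Well-formedness conditions
are stated separately. -/
structure HModel (Ag Atom V : Type) where
  Vset : Set V
  E : Set (Set V × Set V)
  χ : V → Ag
  ℓ : V → Set Atom

namespace HModel

variable {Ag Atom V : Type}

/-- `(Vset, E)` is a directed hypergraph: the vertex set is nonempty and every
hyperedge consists of a finite tail and a finite head, disjoint from each
other, both made of vertices. -/
def IsHypergraph (M : HModel Ag Atom V) : Prop :=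
  M.Vset.Nonempty ∧
    ∀ e ∈ M.E, e.1 ⊆ M.Vset ∧ e.2 ⊆ M.Vset ∧ e.1.Finite ∧ e.2.Finite ∧ Disjoint e.1 e.2

/-- χ is a coloring: distinct vertices of the same hyperedge get distinct colors. -/
def IsChromatic (M : HModel Ag Atom V) : Prop :=
  ∀ e ∈ M.E, Set.InjOn M.χ (ebar e)

/-- The valuation assigns to an `a`-colored vertex only local variables of `a`. -/
def ValOk (owner : Atom → Ag) (M : HModel Ag Atom V) : Prop :=
  ∀ v ∈ M.Vset, M.ℓ v ⊆ {p | owner p = M.χ v}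

/-- M is a (well-formed, chromatic) hypergraph model. -/
def IsModel (owner : Atom → Ag) (M : HModel Ag Atom V) : Prop :=
  M.IsHypergraph ∧ M.IsChromatic ∧ M.ValOk owner

/-- Simplicity: for distinct hyperedges, `ē₁ ⊄ ē₂`. -/
def Simple (M : HModel Ag Atom V) : Prop :=
  ∀ e₁ ∈ M.E, ∀ e₂ ∈ M.E, e₁ ≠ e₂ → ¬ ebar e₁ ⊆ ebar e₂

/-- n-uniformity: every hyperedge has exactly `n` vertices. -/
def Uniform (M : HModel Ag Atom V) (n : ℕ) : Prop :=
  ∀ e ∈ M.E, (ebar e).ncard = n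

/-- Tail-completeness: every vertex lies in the tail of some hyperedge. -/
def TailComplete (M : HModel Ag Atom V) : Prop :=
  ∀ v ∈ M.Vset, ∃ e ∈ M.E, v ∈ e.1

end HModel

section HSemantics

variable {Ag Atom V : Type}

/-- The doxastic accessibility relation `B^G_a` between hyperedges:
some `a`-colored vertex lies in `ē₁ ∩ T(e₂)`. -/
def Bacc (M : HModel Ag Atom V) (a : Ag) (e₁ e₂ : Set V × Set V) : Prop :=
  ∃ u : V, M.χ u = a ∧ u ∈ ebar e₁ ∧ u ∈ e₂.1

/-- The epistemic accessibility relation `K^G_a` between hyperedges: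
some `a`-colored vertex lies in `ē₁ ∩ ē₂`. -/
def Kacc (M : HModel Ag Atom V) (a : Ag) (e₁ e₂ : Set V × Set V) : Prop :=
  ∃ u : V, M.χ u = a ∧ u ∈ ebar e₁ ∧ u ∈ ebar e₂

/-- `ℓ(e) = ⋃_{u ∈ ē} ℓ(u)`. -/
def elabel (M : HModel Ag Atom V) (e : Set V × Set V) : Set Atom :=
  ⋃ u ∈ ebar e, M.ℓ u

/-- Hypergraph satisfaction `⊨ₕ`. -/
def hsat (M : HModel Ag Atom V) : Set V × Set V → Form Ag Atom → Prop
  | e, .atom p  => p ∈ elabel M e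
  | e, .neg φ   => ¬ hsat M e φ
  | e, .and φ ψ => hsat M e φ ∧ hsat M e ψ
  | e, .B a φ   => ∀ e' ∈ M.E, Bacc M a e e' → hsat M e' φ
  | e, .K a φ   => ∀ e' ∈ M.E, Kacc M a e e' → hsat M e' φ

end HSemantics

end DoxHG

namespace DoxHG

section Canonical

variable {Ag Atom : Type}

/-- `Γ^{B_a} := {φ | B_aφ ∈ Γ}`. -/
def projB (Γ : Set (Form Ag Atom)) (a : Ag) : Set (Form Ag Atom) := {φ | Form.B a φ ∈ Γ}

/-- `Γ^{K_a} := {φ | K_aφ ∈ Γ}`. -/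
def projK (Γ : Set (Form Ag Atom)) (a : Ag) : Set (Form Ag Atom) := {φ | Form.K a φ ∈ Γ}

/-- `V_a(Γ) := Γ ∩ Var_a` (as a set of atomic formulas). -/
def Vform (owner : Atom → Ag) (Γ : Set (Form Ag Atom)) (a : Ag) : Set (Form Ag Atom) :=
  {ψ | ψ ∈ Γ ∧ ∃ p : Atom, owner p = a ∧ ψ = Form.atom p}

/-- `B̂_a(Γ) := {B_aφ | B_aφ ∈ Γ}`. -/
def Bhat (Γ : Set (Form Ag Atom)) (a : Ag) : Set (Form Ag Atom) :=
  {ψ | ψ ∈ Γ ∧ ∃ φ : Form Ag Atom, ψ = Form.B a φ}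

/-- `s(Γ,a) := V_a(Γ) ∪ B̂_a(Γ)`. -/
def sSet (owner : Atom → Ag) (Γ : Set (Form Ag Atom)) (a : Ag) : Set (Form Ag Atom) :=
  Vform owner Γ a ∪ Bhat Γ a

/-- The canonical vertex `s(Γ,a)`, tagged with its color `a`. -/
def cvert (owner : Atom → Ag) (Γ : Set (Form Ag Atom)) (a : Ag) :
    Ag × Set (Form Ag Atom) :=
  (a, sSet owner Γ a)

/-- `T(Γ) := {s(Γ,b) | b ∈ Ag, Γ^{B_b} ⊆ Γ}`. -/
def Tset (owner : Atom → Ag) (Γ : Set (Form Ag Atom)) : Set (Ag × Set (Form Ag Atom)) :=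
  {v | ∃ b : Ag, projB Γ b ⊆ Γ ∧ v = cvert owner Γ b}

/-- `H(Γ) := {s(Γ,b) | b ∈ Ag, Γ^{B_b} ⊄ Γ}`. -/
def Hset (owner : Atom → Ag) (Γ : Set (Form Ag Atom)) : Set (Ag × Set (Form Ag Atom)) :=
  {v | ∃ b : Ag, ¬ projB Γ b ⊆ Γ ∧ v = cvert owner Γ b}

/-- The canonical hyperedge `e_Γ = (T(Γ), H(Γ))`. -/
def cedge (owner : Atom → Ag) (Γ : Set (Form Ag Atom)) :
    Set (Ag × Set (Form Ag Atom)) × Set (Ag × Set (Form Ag Atom)) :=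
  (Tset owner Γ, Hset owner Γ)

/-- The canonical hypergraph model `M^c` for EDL. -/
def canonHM [Inhabited Atom] (owner : Atom → Ag) :
    HModel Ag Atom (Ag × Set (Form Ag Atom)) where
  Vset := {v | ∃ Γ : Set (Form Ag Atom), MaxEDLConsistent owner Γ ∧ ∃ a : Ag, v = cvert owner Γ a}
  E := {e | ∃ Γ : Set (Form Ag Atom), MaxEDLConsistent owner Γ ∧ e = cedge owner Γ}
  χ := Prod.fst
  ℓ := fun v => {p : Atom | Form.atom p ∈ v.2 ∧ owner p = v.1}

end Canonical

end DoxHG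

namespace DoxHG

/-! ### Auxiliary machinery for Statement 10 -/

section Aux10

variable {Ag Atom : Type}

/-! #### Boolean valuation helpers -/

lemma val_imp (v : Form Ag Atom → Bool) (hn : ∀ ψ, v ψ.neg = !v ψ)
    (ha : ∀ ψ χ, v (ψ.and χ) = (v ψ && v χ)) (A B : Form Ag Atom) :
    v (A.imp B) = (!v A || v B) := by
  show v (Form.neg (Form.and (Form.neg (Form.neg A)) (Form.neg B))) = _
  rw [hn, ha, hn, hn, hn, Bool.not_not]
  cases v A <;> cases v B <;> rfl

lemma val_bot [Inhabited Atom] (v : Form Ag Atom → Bool) (hn : ∀ ψ, v ψ.neg = !v ψ)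
    (ha : ∀ ψ χ, v (ψ.and χ) = (v ψ && v χ)) :
    v (Form.bot : Form Ag Atom) = false := by
  show v (Form.and (Form.atom default) (Form.neg (Form.atom default))) = false
  rw [ha, hn]
  cases v (Form.atom default) <;> rfl

/-! #### Concrete tautologies -/

section TautLemmas

variable (A B C D X : Form Ag Atom)

lemma t_self : Tautology (A.imp A) := by
  intro v hn ha; rw [val_imp v hn ha]; cases v A <;> rfl

lemma t_k : Tautology (A.imp (B.imp A)) := by
  intro v hn ha; simp only [val_imp v hn ha]; cases v A <;> cases v B <;> rfl

lemma t_trans : Tautology ((A.imp B).imp ((B.imp C).imp (A.imp C))) := by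
  intro v hn ha; simp only [val_imp v hn ha]
  cases v A <;> cases v B <;> cases v C <;> rfl

lemma t_andl : Tautology ((A.and B).imp A) := by
  intro v hn ha; rw [val_imp v hn ha, ha]; cases v A <;> cases v B <;> rfl

lemma t_andr : Tautology ((A.and B).imp B) := by
  intro v hn ha; rw [val_imp v hn ha, ha]; cases v A <;> cases v B <;> rfl

lemma t_and_intro : Tautology ((X.imp A).imp ((X.imp B).imp (X.imp (A.and B)))) := by
  intro v hn ha; simp only [val_imp v hn ha, ha]
  cases v X <;> cases v A <;> cases v B <;> rfl

lemma t_mp_under : Tautology ((X.imp (A.imp B)).imp ((X.imp A).imp (X.imp B))) := by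
  intro v hn ha; simp only [val_imp v hn ha]
  cases v X <;> cases v A <;> cases v B <;> rfl

lemma t_pair : Tautology (A.imp (B.imp (A.and B))) := by
  intro v hn ha; simp only [val_imp v hn ha, ha]
  cases v A <;> cases v B <;> rfl

lemma t_pair' : Tautology (A.imp (B.imp (B.and A))) := by
  intro v hn ha; simp only [val_imp v hn ha, ha]
  cases v A <;> cases v B <;> rfl

lemma t_notbot [Inhabited Atom] : Tautology ((Form.bot : Form Ag Atom).neg) := by
  intro v hn ha; rw [hn, val_bot v hn ha]; rfl

lemma t_imp_notbot [Inhabited Atom] : Tautology (X.imp (Form.bot : Form Ag Atom).neg) := by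
  intro v hn ha; rw [val_imp v hn ha, hn, val_bot v hn ha]; cases v X <;> rfl

lemma t_absurd [Inhabited Atom] : Tautology (A.imp (A.neg.imp (Form.bot : Form Ag Atom))) := by
  intro v hn ha; simp only [val_imp v hn ha, hn, val_bot v hn ha]
  cases v A <;> rfl

lemma t_cases [Inhabited Atom] :
    Tautology ((A.imp Form.bot).imp ((A.neg.imp (Form.bot : Form Ag Atom)).imp Form.bot)) := by
  intro v hn ha; simp only [val_imp v hn ha, hn, val_bot v hn ha]
  cases v A <;> rfl

lemma t_ded : Tautology ((C.imp (A.imp D)).imp ((D.imp B).imp (C.imp (A.imp B)))) := by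
  intro v hn ha; simp only [val_imp v hn ha]
  cases v A <;> cases v B <;> cases v C <;> cases v D <;> rfl

lemma t_imp_self_under : Tautology (X.imp (A.imp A)) := by
  intro v hn ha; simp only [val_imp v hn ha]
  cases v X <;> cases v A <;> rfl

end TautLemmas

/-! #### EDL provability toolkit -/

variable {owner : Atom → Ag}

lemma prov_trans {A B C : Form Ag Atom} (h1 : EDLProv owner (A.imp B))
    (h2 : EDLProv owner (B.imp C)) : EDLProv owner (A.imp C) :=
  ((EDLProv.taut (t_trans A B C)).mp h1).mp h2

lemma prov_Bnec (a : Ag) {φ : Form Ag Atom} (h : EDLProv owner φ) :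
    EDLProv owner (Form.B a φ) :=
  (EDLProv.axKIB a φ).mp (h.nec a)

lemma prov_Bmono (a : Ag) {φ ψ : Form Ag Atom} (h : EDLProv owner (φ.imp ψ)) :
    EDLProv owner ((Form.B a φ).imp (Form.B a ψ)) :=
  (EDLProv.axKB a φ ψ).mp (prov_Bnec a h)

variable [Inhabited Atom]

lemma prov_conj_mem {L : List (Form Ag Atom)} {χ : Form Ag Atom} (h : χ ∈ L) :
    EDLProv owner ((conj L).imp χ) := by
  induction L with
  | nil => simp at h
  | cons ψ L ih =>
    rcases List.mem_cons.mp h with rfl | h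
    · cases L with
      | nil => exact EDLProv.taut (t_self χ)
      | cons φ' L' =>
        show EDLProv owner ((Form.and χ (conj (φ' :: L'))).imp χ)
        exact EDLProv.taut (t_andl χ (conj (φ' :: L')))
    · cases L with
      | nil => simp at h
      | cons φ' L' =>
        show EDLProv owner ((Form.and ψ (conj (φ' :: L'))).imp χ)
        exact prov_trans (EDLProv.taut (t_andr ψ (conj (φ' :: L')))) (ih h)

lemma prov_conj_intro {L : List (Form Ag Atom)} {X : Form Ag Atom}
    (h : ∀ χ ∈ L, EDLProv owner (X.imp χ)) : EDLProv owner (X.imp (conj L)) := by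
  induction L with
  | nil => exact EDLProv.taut (t_imp_notbot X)
  | cons ψ L ih =>
    cases L with
    | nil => exact h ψ (List.mem_cons_self)
    | cons φ' L' =>
      show EDLProv owner (X.imp (Form.and ψ (conj (φ' :: L'))))
      exact ((EDLProv.taut (t_and_intro ψ (conj (φ' :: L')) X)).mp
        (h ψ (List.mem_cons_self))).mp
        (ih (fun χ hχ => h χ (List.mem_cons_of_mem _ hχ)))

lemma provFrom_of_mem {Γ : Set (Form Ag Atom)} {φ : Form Ag Atom} (h : φ ∈ Γ) :
    ProvFrom owner Γ φ :=
  ⟨[φ], by simpa using h, prov_conj_mem (List.mem_cons_self)⟩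

lemma provFrom_of_prov {Γ : Set (Form Ag Atom)} {φ : Form Ag Atom} (h : EDLProv owner φ) :
    ProvFrom owner Γ φ :=
  ⟨[], by simp, (EDLProv.taut (t_k φ (conj ([] : List (Form Ag Atom))))).mp h⟩

lemma provFrom_mp {Γ : Set (Form Ag Atom)} {φ ψ : Form Ag Atom}
    (h1 : ProvFrom owner Γ (φ.imp ψ)) (h2 : ProvFrom owner Γ φ) : ProvFrom owner Γ ψ := by
  obtain ⟨L1, hL1, hp1⟩ := h1
  obtain ⟨L2, hL2, hp2⟩ := h2
  refine ⟨L1 ++ L2, ?_, ?_⟩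
  · intro χ hχ
    rcases List.mem_append.mp hχ with h | h
    · exact hL1 χ h
    · exact hL2 χ h
  · have a1 : EDLProv owner ((conj (L1 ++ L2)).imp (conj L1)) :=
      prov_conj_intro (fun χ hχ => prov_conj_mem (List.mem_append_left _ hχ))
    have a2 : EDLProv owner ((conj (L1 ++ L2)).imp (conj L2)) :=
      prov_conj_intro (fun χ hχ => prov_conj_mem (List.mem_append_right _ hχ))
    exact ((EDLProv.taut (t_mp_under φ ψ (conj (L1 ++ L2)))).mp (prov_trans a1 hp1)).mp
      (prov_trans a2 hp2)

lemma provFrom_deduction {Γ : Set (Form Ag Atom)} {φ ψ : Form Ag Atom}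
    (h : ProvFrom owner (insert φ Γ) ψ) : ProvFrom owner Γ (φ.imp ψ) := by
  classical
  obtain ⟨L, hL, hp⟩ := h
  set M := L.filter (fun χ => decide (χ ≠ φ)) with hM
  refine ⟨M, ?_, ?_⟩
  · intro χ hχ
    have h' := List.mem_filter.mp hχ
    have hne : χ ≠ φ := by simpa using h'.2
    rcases Set.mem_insert_iff.mp (hL χ h'.1) with h | h
    · exact absurd h hne
    · exact h
  · have h1 : EDLProv owner ((conj (φ :: M)).imp (conj L)) := by
      refine prov_conj_intro (fun χ hχ => prov_conj_mem ?_)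
      rcases eq_or_ne χ φ with rfl | hne
      · exact List.mem_cons_self
      · exact List.mem_cons_of_mem _ (List.mem_filter.mpr ⟨hχ, by simpa using hne⟩)
    have h2 : EDLProv owner ((conj (φ :: M)).imp ψ) := prov_trans h1 hp
    have h3 : EDLProv owner ((conj M).imp (φ.imp (conj (φ :: M)))) := by
      cases M with
      | nil => exact EDLProv.taut (t_imp_self_under φ (conj ([] : List (Form Ag Atom))))
      | cons χ' M' =>
        show EDLProv owner ((conj (χ' :: M')).imp (φ.imp (Form.and φ (conj (χ' :: M')))))
        exact EDLProv.taut (t_pair' (conj (χ' :: M')) φ)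
    exact ((EDLProv.taut (t_ded φ ψ (conj M) (conj (φ :: M)))).mp h3).mp h2

/-! #### Maximal consistent set lemmas -/

variable {Γ : Set (Form Ag Atom)}

lemma mcs_not_both (hΓ : MaxEDLConsistent owner Γ) {φ : Form Ag Atom}
    (h1 : φ ∈ Γ) (h2 : φ.neg ∈ Γ) : False :=
  hΓ.1 (provFrom_mp (provFrom_mp (provFrom_of_prov (EDLProv.taut (t_absurd φ)))
    (provFrom_of_mem h1)) (provFrom_of_mem h2))

lemma mcs_closed (hΓ : MaxEDLConsistent owner Γ) {φ : Form Ag Atom}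
    (h : ProvFrom owner Γ φ) : φ ∈ Γ := by
  by_contra hφ
  have h1 : ¬ EDLConsistent owner (insert φ Γ) := hΓ.2 _ (Set.ssubset_insert hφ)
  have h2 : ProvFrom owner (insert φ Γ) Form.bot := by
    by_contra hc; exact h1 hc
  exact hΓ.1 (provFrom_mp (provFrom_deduction h2) h)

lemma mcs_mem_of_prov (hΓ : MaxEDLConsistent owner Γ) {φ : Form Ag Atom}
    (h : EDLProv owner φ) : φ ∈ Γ :=
  mcs_closed hΓ (provFrom_of_prov h)

lemma mcs_mp (hΓ : MaxEDLConsistent owner Γ) {φ ψ : Form Ag Atom}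
    (h1 : φ.imp ψ ∈ Γ) (h2 : φ ∈ Γ) : ψ ∈ Γ :=
  mcs_closed hΓ (provFrom_mp (provFrom_of_mem h1) (provFrom_of_mem h2))

lemma mcs_neg_of_not_mem (hΓ : MaxEDLConsistent owner Γ) {φ : Form Ag Atom}
    (h : φ ∉ Γ) : φ.neg ∈ Γ := by
  by_contra hn
  have c1 : ¬ EDLConsistent owner (insert φ Γ) := hΓ.2 _ (Set.ssubset_insert h)
  have c2 : ¬ EDLConsistent owner (insert φ.neg Γ) := hΓ.2 _ (Set.ssubset_insert hn)
  have d1 : ProvFrom owner Γ (φ.imp Form.bot) :=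
    provFrom_deduction (by by_contra hc; exact c1 hc)
  have d2 : ProvFrom owner Γ (φ.neg.imp Form.bot) :=
    provFrom_deduction (by by_contra hc; exact c2 hc)
  exact hΓ.1 (provFrom_mp (provFrom_mp (provFrom_of_prov (EDLProv.taut (t_cases φ))) d1) d2)

lemma mcs_neg_iff (hΓ : MaxEDLConsistent owner Γ) {φ : Form Ag Atom} :
    φ.neg ∈ Γ ↔ φ ∉ Γ :=
  ⟨fun h2 h1 => mcs_not_both hΓ h1 h2, mcs_neg_of_not_mem hΓ⟩

lemma mcs_and_iff (hΓ : MaxEDLConsistent owner Γ) {φ ψ : Form Ag Atom} :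
    φ.and ψ ∈ Γ ↔ φ ∈ Γ ∧ ψ ∈ Γ := by
  constructor
  · intro h
    exact ⟨mcs_mp hΓ (mcs_mem_of_prov hΓ (EDLProv.taut (t_andl φ ψ))) h,
      mcs_mp hΓ (mcs_mem_of_prov hΓ (EDLProv.taut (t_andr φ ψ))) h⟩
  · rintro ⟨h1, h2⟩
    exact mcs_mp hΓ (mcs_mp hΓ (mcs_mem_of_prov hΓ (EDLProv.taut (t_pair φ ψ))) h1) h2

lemma mcs_loc_pos (hΓ : MaxEDLConsistent owner Γ) {p : Atom} {a : Ag} (hpa : owner p = a)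
    (hp : Form.atom p ∈ Γ) : Form.B a (Form.atom p) ∈ Γ :=
  mcs_mp hΓ ((mcs_and_iff hΓ).mp (mcs_mem_of_prov hΓ (EDLProv.axLoc a p hpa))).1 hp

lemma mcs_loc_neg (hΓ : MaxEDLConsistent owner Γ) {p : Atom} {a : Ag} (hpa : owner p = a)
    (hp : (Form.atom p : Form Ag Atom).neg ∈ Γ) : Form.B a (Form.atom p).neg ∈ Γ :=
  mcs_mp hΓ ((mcs_and_iff hΓ).mp (mcs_mem_of_prov hΓ (EDLProv.axLoc a p hpa))).2 hp

lemma mcs_B_and (hΓ : MaxEDLConsistent owner Γ) {a : Ag} {φ ψ : Form Ag Atom}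
    (h1 : Form.B a φ ∈ Γ) (h2 : Form.B a ψ ∈ Γ) : Form.B a (φ.and ψ) ∈ Γ := by
  have x1 : Form.B a (ψ.imp (φ.and ψ)) ∈ Γ :=
    mcs_mp hΓ (mcs_mem_of_prov hΓ (prov_Bmono a (EDLProv.taut (t_pair φ ψ)))) h1
  exact mcs_mp hΓ (mcs_mp hΓ (mcs_mem_of_prov hΓ (EDLProv.axKB a ψ (φ.and ψ))) x1) h2

lemma mcs_not_B_both (hΓ : MaxEDLConsistent owner Γ) {a : Ag} {φ : Form Ag Atom}
    (h1 : Form.B a φ ∈ Γ) (h2 : Form.B a φ.neg ∈ Γ) : False :=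
  mcs_not_both hΓ (mcs_B_and hΓ h1 h2) (mcs_mem_of_prov hΓ (EDLProv.axDB a φ))

lemma mcs_K_iff_BK (hΓ : MaxEDLConsistent owner Γ) {a : Ag} {ψ : Form Ag Atom} :
    Form.K a ψ ∈ Γ ↔ Form.B a (Form.K a ψ) ∈ Γ := by
  constructor
  · intro h
    exact mcs_mp hΓ (mcs_mem_of_prov hΓ
      (prov_trans (EDLProv.ax4K a ψ) (EDLProv.axKIB a (Form.K a ψ)))) h
  · intro h
    by_contra hK
    have hnK : (Form.K a ψ).neg ∈ Γ := mcs_neg_of_not_mem hΓ hK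
    have hB : Form.B a (Form.K a ψ).neg ∈ Γ :=
      mcs_mp hΓ (mcs_mem_of_prov hΓ
        (prov_trans (EDLProv.ax5K a ψ) (EDLProv.axKIB a (Form.K a ψ).neg))) hnK
    exact mcs_not_B_both hΓ h hB

lemma mcs_B_conj (hΓ : MaxEDLConsistent owner Γ) {a : Ag} {L : List (Form Ag Atom)}
    (h : ∀ χ ∈ L, Form.B a χ ∈ Γ) : Form.B a (conj L) ∈ Γ := by
  induction L with
  | nil => exact mcs_mem_of_prov hΓ (prov_Bnec a (EDLProv.taut t_notbot))
  | cons ψ L ih =>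
    cases L with
    | nil => exact h ψ (List.mem_cons_self)
    | cons φ' L' =>
      show Form.B a (Form.and ψ (conj (φ' :: L'))) ∈ Γ
      exact mcs_B_and hΓ (h ψ (List.mem_cons_self))
        (ih (fun χ hχ => h χ (List.mem_cons_of_mem _ hχ)))

lemma projB_consistent (hΓ : MaxEDLConsistent owner Γ) (a : Ag) :
    EDLConsistent owner (projB Γ a) := by
  rintro ⟨L, hL, hp⟩
  have h1 : Form.B a (conj L) ∈ Γ := mcs_B_conj hΓ (fun χ hχ => hL χ hχ)
  have h2 : Form.B a Form.bot ∈ Γ := mcs_mp hΓ (mcs_mem_of_prov hΓ (prov_Bmono a hp)) h1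
  have h3 : (Form.B a (Form.bot : Form Ag Atom)).neg ∈ Γ :=
    mcs_mem_of_prov hΓ (EDLProv.axDB a (Form.atom default))
  exact mcs_not_both hΓ h2 h3

/-! #### Lindenbaum -/

lemma chain_finite_bound {α : Type*} {c : Set (Set α)} (hchain : IsChain (· ⊆ ·) c)
    (hne : c.Nonempty) (L : List α) (hL : ∀ x ∈ L, x ∈ ⋃₀ c) :
    ∃ S ∈ c, ∀ x ∈ L, x ∈ S := by
  induction L with
  | nil => exact ⟨hne.choose, hne.choose_spec, by simp⟩
  | cons x L ih =>
    obtain ⟨S, hSc, hS⟩ := ih (fun y hy => hL y (List.mem_cons_of_mem _ hy))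
    obtain ⟨T, hTc, hxT⟩ := hL x (List.mem_cons_self)
    rcases eq_or_ne S T with rfl | hne'
    · refine ⟨S, hSc, fun y hy => ?_⟩
      rcases List.mem_cons.mp hy with rfl | hy
      · exact hxT
      · exact hS y hy
    · rcases hchain hSc hTc hne' with hsub | hsub
      · refine ⟨T, hTc, fun y hy => ?_⟩
        rcases List.mem_cons.mp hy with rfl | hy
        · exact hxT
        · exact hsub (hS y hy)
      · refine ⟨S, hSc, fun y hy => ?_⟩
        rcases List.mem_cons.mp hy with rfl | hy
        · exact hsub hxT
        · exact hS y hy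

lemma lindenbaum {Sig0 : Set (Form Ag Atom)} (h : EDLConsistent owner Sig0) :
    ∃ Γ, Sig0 ⊆ Γ ∧ MaxEDLConsistent owner Γ := by
  have hZ : ∀ c ⊆ {Δ : Set (Form Ag Atom) | EDLConsistent owner Δ},
      IsChain (· ⊆ ·) c → c.Nonempty →
      ∃ ub ∈ {Δ : Set (Form Ag Atom) | EDLConsistent owner Δ}, ∀ s ∈ c, s ⊆ ub := by
    intro c hcS hchain hcne
    refine ⟨⋃₀ c, ?_, fun s hs => Set.subset_sUnion_of_mem hs⟩
    rintro ⟨L, hL, hp⟩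
    obtain ⟨S, hSc, hLS⟩ := chain_finite_bound hchain hcne L hL
    exact hcS hSc ⟨L, hLS, hp⟩
  obtain ⟨m, hsub, hmax⟩ :=
    zorn_subset_nonempty {Δ : Set (Form Ag Atom) | EDLConsistent owner Δ} hZ Sig0 h
  refine ⟨m, hsub, hmax.prop, fun Δ hΔ hcons => ?_⟩
  exact hΔ.2 (hmax.le_of_ge hcons hΔ.1)

/-! #### Canonical model lemmas -/

lemma sSet_subset (owner : Atom → Ag) (Γ : Set (Form Ag Atom)) (a : Ag) :
    sSet owner Γ a ⊆ Γ := by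
  rintro ψ (⟨h, -⟩ | ⟨h, -⟩) <;> exact h

lemma mcs_eq_of_traceEq {Γ₁ Γ₂ : Set (Form Ag Atom)} (h₁ : MaxEDLConsistent owner Γ₁)
    (h₂ : MaxEDLConsistent owner Γ₂) (hs : ∀ a, sSet owner Γ₁ a = sSet owner Γ₂ a) :
    Γ₁ = Γ₂ := by
  have hatom : ∀ p : Atom, (Form.atom p : Form Ag Atom) ∈ Γ₁ ↔ Form.atom p ∈ Γ₂ := by
    intro p
    constructor
    · intro h
      refine sSet_subset owner Γ₂ (owner p) ?_
      rw [← hs]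
      exact Or.inl ⟨h, p, rfl, rfl⟩
    · intro h
      refine sSet_subset owner Γ₁ (owner p) ?_
      rw [hs]
      exact Or.inl ⟨h, p, rfl, rfl⟩
  have hB : ∀ (a : Ag) (ψ : Form Ag Atom), Form.B a ψ ∈ Γ₁ ↔ Form.B a ψ ∈ Γ₂ := by
    intro a ψ
    constructor
    · intro h
      refine sSet_subset owner Γ₂ a ?_
      rw [← hs]
      exact Or.inr ⟨h, ψ, rfl⟩
    · intro h
      refine sSet_subset owner Γ₁ a ?_
      rw [hs]
      exact Or.inr ⟨h, ψ, rfl⟩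
  refine Set.ext fun φ => ?_
  induction φ with
  | atom p => exact hatom p
  | neg ψ ih => rw [mcs_neg_iff h₁, mcs_neg_iff h₂]; exact not_congr ih
  | and ψ χ ih1 ih2 => rw [mcs_and_iff h₁, mcs_and_iff h₂, ih1, ih2]
  | B a ψ ih => exact hB a ψ
  | K a ψ ih => rw [mcs_K_iff_BK h₁, mcs_K_iff_BK h₂]; exact hB a _

lemma ebar_cedge (owner : Atom → Ag) (Γ : Set (Form Ag Atom)) :
    ebar (cedge owner Γ) = Set.range (cvert owner Γ) := by
  ext v
  constructor
  · rintro (⟨b, -, rfl⟩ | ⟨b, -, rfl⟩) <;> exact ⟨b, rfl⟩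
  · rintro ⟨b, rfl⟩
    by_cases hb : projB Γ b ⊆ Γ
    · exact Or.inl ⟨b, hb, rfl⟩
    · exact Or.inr ⟨b, hb, rfl⟩

end Aux10

/-- The canonical hypergraph of the canonical hypergraph model
for EDL is simple, `n`-uniform (`n = |Ag|`) and tail-complete. -/
theorem statement_10 {Ag Atom : Type} [Fintype Ag] [Nonempty Ag] [Countable Atom] [Inhabited Atom]
    (owner : Atom → Ag) :
    (canonHM owner).Simple ∧
    (canonHM owner).Uniform (Fintype.card Ag) ∧
    (canonHM owner).TailComplete := by
  refine ⟨?_, ?_, ?_⟩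
  · -- Simple
    rintro e₁ ⟨Γ₁, h₁, rfl⟩ e₂ ⟨Γ₂, h₂, rfl⟩ hne hsub
    apply hne
    have hs : ∀ a, sSet owner Γ₁ a = sSet owner Γ₂ a := by
      intro a
      have hv : cvert owner Γ₁ a ∈ ebar (cedge owner Γ₂) := by
        apply hsub
        rw [ebar_cedge]
        exact ⟨a, rfl⟩
      rw [ebar_cedge] at hv
      obtain ⟨b, hb⟩ := hv
      simp only [cvert, Prod.mk.injEq] at hb
      obtain ⟨rfl, hb2⟩ := hb
      exact hb2.symm
    rw [mcs_eq_of_traceEq h₁ h₂ hs]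
  · -- Uniform
    rintro e ⟨Γ, hΓ, rfl⟩
    have hinj : Function.Injective (cvert owner Γ) := fun a b h => congrArg Prod.fst h
    rw [ebar_cedge, ← Nat.card_coe_set_eq, Nat.card_range_of_injective hinj]
    exact Nat.card_eq_fintype_card
  · -- TailComplete
    rintro v ⟨Γ, hΓ, a, rfl⟩
    obtain ⟨Δ, hsub, hΔ⟩ := lindenbaum (projB_consistent hΓ a)
    have hBiff : ∀ ψ : Form Ag Atom, Form.B a ψ ∈ Δ ↔ Form.B a ψ ∈ Γ := by
      intro ψ
      constructor
      · intro h
        by_contra hn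
        have h1 : (Form.B a ψ).neg ∈ Γ := mcs_neg_of_not_mem hΓ hn
        have h2 : Form.B a (Form.B a ψ).neg ∈ Γ :=
          mcs_mp hΓ (mcs_mem_of_prov hΓ (EDLProv.ax5B a ψ)) h1
        exact mcs_not_both hΔ h (hsub (show (Form.B a ψ).neg ∈ projB Γ a from h2))
      · intro h
        have h2 : Form.B a (Form.B a ψ) ∈ Γ :=
          mcs_mp hΓ (mcs_mem_of_prov hΓ (EDLProv.ax4B a ψ)) h
        exact hsub (show Form.B a ψ ∈ projB Γ a from h2)
    have hatom : ∀ p : Atom, owner p = a → ((Form.atom p : Form Ag Atom) ∈ Δ ↔ Form.atom p ∈ Γ) := by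
      intro p hpa
      constructor
      · intro h
        by_contra hn
        have h1 : (Form.atom p : Form Ag Atom).neg ∈ Γ := mcs_neg_of_not_mem hΓ hn
        have h2 : Form.B a (Form.atom p : Form Ag Atom).neg ∈ Γ := mcs_loc_neg hΓ hpa h1
        exact mcs_not_both hΔ h (hsub (show (Form.atom p : Form Ag Atom).neg ∈ projB Γ a from h2))
      · intro h
        exact hsub (show (Form.atom p : Form Ag Atom) ∈ projB Γ a from mcs_loc_pos hΓ hpa h)
    have hcorrect : projB Δ a ⊆ Δ := by
      intro ψ hψ
      exact hsub (show ψ ∈ projB Γ a from (hBiff ψ).mp hψ)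
    have hss : sSet owner Γ a = sSet owner Δ a := by
      ext ψ
      constructor
      · rintro (⟨hψΓ, p, hpa, rfl⟩ | ⟨hψΓ, χ, rfl⟩)
        · exact Or.inl ⟨(hatom p hpa).mpr hψΓ, p, hpa, rfl⟩
        · exact Or.inr ⟨(hBiff χ).mpr hψΓ, χ, rfl⟩
      · rintro (⟨hψΔ, p, hpa, rfl⟩ | ⟨hψΔ, χ, rfl⟩)
        · exact Or.inl ⟨(hatom p hpa).mp hψΔ, p, hpa, rfl⟩
        · exact Or.inr ⟨(hBiff χ).mp hψΔ, χ, rfl⟩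
    refine ⟨cedge owner Δ, ⟨Δ, hΔ, rfl⟩, ⟨a, hcorrect, ?_⟩⟩
    show cvert owner Γ a = cvert owner Δ a
    simp [cvert, hss]

end DoxHG
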